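/- arXiv:2204.10567 — 2 statements merged into one kernel-verified Lean document; each statement's English description precedes it below -/
import Mathlib

section
/- Let G be a group acting transitively on a finite nonempty set R, and let H be a normal subgroup of G of finite index such that the index (G:H) is coprime to the cardinality of R. Then H acts transitively on R. -/
/-!
The `H`-orbits form a system of blocks for `G`, permuted transitively by `G`. Since `H` fixes each
block, the number of blocks divides `(G : H)`; it also divides `#R`, being `#R` over the common
size of the blocks. Coprimality forces a single block, i.e. one `H`-orbit.
-/

open Set
open scoped Pointwise

namespace MulAction

variable {G X : Type*} [Group G] [MulAction G X]

theorem le_stabilizer_orbit_of_normal (N : Subgroup G) [N.Normal] (a : X) :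
    N ≤ stabilizer G (orbit N a) := by
  intro g hg
  rw [mem_stabilizer_iff, smul_orbit_eq_orbit_smul, orbit_eq_iff]
  exact mem_orbit a (⟨g, hg⟩ : N)

theorem ncard_orbit_orbit_dvd_index_of_normal (N : Subgroup G) [N.Normal] (a : X) :
    (orbit G (orbit N a)).ncard ∣ N.index := by
  rw [← index_stabilizer]
  exact Subgroup.index_dvd_of_le (le_stabilizer_orbit_of_normal N a)

theorem orbit_eq_univ_of_normal_of_coprime [IsPretransitive G X] [Finite X] (N : Subgroup G)
    [N.Normal] (hcop : N.index.Coprime (Nat.card X)) (a : X) :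
    orbit N a = univ := by
  have hcard := (IsBlock.orbit_of_normal (G := G) (N := N) a).ncard_block_mul_ncard_orbit_eq
    ⟨a, mem_orbit_self a⟩
  have hblocks : (orbit G (orbit N a)).ncard = 1 :=
    Nat.eq_one_of_dvd_coprimes hcop (ncard_orbit_orbit_dvd_index_of_normal N a)
      (Dvd.intro_left _ hcard)
  rw [hblocks, mul_one, ← ncard_univ] at hcard
  exact eq_of_subset_of_ncard_le (subset_univ _) hcard.ge

end MulAction

theorem stmt_1_general {G R : Type*} [Group G] [MulAction G R] [Finite R]
    [MulAction.IsPretransitive G R] (H : Subgroup G) [H.Normal]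
    (hcop : Nat.Coprime H.index (Nat.card R)) :
    MulAction.IsPretransitive H R :=
  ⟨fun x y ↦ MulAction.mem_orbit_iff.mp <|
    (MulAction.orbit_eq_univ_of_normal_of_coprime H hcop x).symm ▸ mem_univ y⟩

theorem stmt_1 {G R : Type*} [Group G] [MulAction G R] [Finite R] [Nonempty R]
    [MulAction.IsPretransitive G R] (H : Subgroup G) [H.Normal] [H.FiniteIndex]
    (hcop : Nat.Coprime H.index (Nat.card R)) :
    MulAction.IsPretransitive H R :=
  stmt_1_general H hcop
end

section
/- Let K be a field, f(x) ∈ K[x] an irreducible separable polynomial of degree n, and K₁/K a finite Galois extension whose degree [K₁:K] is coprime to n. Then f(x) remains irreducible over K₁. -/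
/-!
Let `g` be an irreducible factor of `f` over `K₁` and `α` a root of `g` in `K₁[x]/(g)`. Since `α`
is also a root of `f`, the degree `n` of `f` divides `[K₁(α) : K] = [K₁ : K] · deg g`; coprimality
gives `n ∣ deg g`, and `deg g ≤ n` forces `g` to be associated to `f`.
-/

open Polynomial Module

namespace Polynomial

variable {K L : Type*} [Field K] [Field L] [Algebra K L] [FiniteDimensional K L]

theorem Irreducible.natDegree_dvd_finrank_mul_natDegree {f : K[X]} (hf : Irreducible f)
    {g : L[X]} (hg : Irreducible g) (hgf : g ∣ f.map (algebraMap K L)) :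
    f.natDegree ∣ finrank K L * g.natDegree := by
  have := Fact.mk hg
  let α := AdjoinRoot.root g
  have : FiniteDimensional L (AdjoinRoot g) := (AdjoinRoot.powerBasis hg.ne_zero).finite
  have : FiniteDimensional K (AdjoinRoot g) := .trans K L (AdjoinRoot g)
  have hα : aeval α f = 0 := by
    rw [← aeval_map_algebraMap L]
    exact (hg.dvd_iff_aeval_eq_zero (AdjoinRoot.eval₂_root g)).2 hgf
  have hf_minpoly : f.natDegree = (minpoly K α).natDegree := by
    rw [minpoly.Irreducible.eq_minpoly hf hα,
      natDegree_C_mul (leadingCoeff_ne_zero.2 hf.ne_zero)]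
  have hg_finrank : finrank L (AdjoinRoot g) = g.natDegree := by
    rw [(AdjoinRoot.powerBasis hg.ne_zero).finrank, AdjoinRoot.powerBasis_dim]
  rw [hf_minpoly, ← hg_finrank, finrank_mul_finrank]
  exact minpoly.degree_dvd (IsIntegral.of_finite K α)

theorem Irreducible.map_of_coprime_finrank {f : K[X]} (hf : Irreducible f)
    (hcop : (finrank K L).Coprime f.natDegree) : Irreducible (f.map (algebraMap K L)) := by
  have hmap_ne : f.map (algebraMap K L) ≠ 0 := map_ne_zero hf.ne_zero
  obtain ⟨g, hg, hgf⟩ := exists_irreducible_of_natDegree_pos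
    (show 0 < (f.map (algebraMap K L)).natDegree by rw [natDegree_map]; exact hf.natDegree_pos)
  have hdvd : f.natDegree ∣ g.natDegree :=
    hcop.symm.dvd_of_dvd_mul_left (hf.natDegree_dvd_finrank_mul_natDegree hg hgf)
  have hle : (f.map (algebraMap K L)).natDegree ≤ g.natDegree := by
    rw [natDegree_map]
    exact Nat.le_of_dvd hg.natDegree_pos hdvd
  exact (associated_of_dvd_of_natDegree_le hgf hmap_ne hle).irreducible hg

end Polynomial

theorem stmt_3_general {K K₁ : Type*} [Field K] [Field K₁] [Algebra K K₁]
    [FiniteDimensional K K₁] {f : Polynomial K}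
    (hf : Irreducible f)
    (hcop : Nat.Coprime (Module.finrank K K₁) f.natDegree) :
    Irreducible (f.map (algebraMap K K₁)) :=
  hf.map_of_coprime_finrank hcop

theorem stmt_3 {K K₁ : Type*} [Field K] [Field K₁] [Algebra K K₁]
    [FiniteDimensional K K₁] [IsGalois K K₁] {f : Polynomial K}
    (hf : Irreducible f) (hsep : f.Separable)
    (hcop : Nat.Coprime (Module.finrank K K₁) f.natDegree) :
    Irreducible (f.map (algebraMap K K₁)) :=
  stmt_3_general hf hcop
end
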